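/- arXiv:2104.13362 — 4 statements merged into one kernel-verified Lean document; each statement's English description precedes it below -/
import Mathlib

section
/- Let q ≥ 1, r = 64q, b = r^4 + 15. Define the set U' of integers consisting of x'_i = i·r + 1, y'_j = j·r^2 + 2, z'_k = k·r^3 + 4 for i,j,k ∈ {1,…,q}, and t'_{(i,j,k)} = r^4 − k·r^3 − j·r^2 − i·r + 8 for (i,j,k) in some set T ⊆ {1,…,q}^3. If four integers a'_1, a'_2, a'_3, a'_4 from U' satisfy a'_1 + a'_2 + a'_3 + a'_4 = b, then there exist i, j, k with (i,j,k) ∈ T such that the four integers are exactly x'_i, y'_j, z'_k, and t'_{(i,j,k)}. -/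
/-- x'_i = i·r + 1 where r = 64q. -/
def xInt (q i : ℕ) : ℤ := i * (64 * q) + 1

/-- y'_j = j·r² + 2 where r = 64q. -/
def yInt (q j : ℕ) : ℤ := j * (64 * q : ℤ) ^ 2 + 2

/-- z'_k = k·r³ + 4 where r = 64q. -/
def zInt (q k : ℕ) : ℤ := k * (64 * q : ℤ) ^ 3 + 4

/-- t'_{(i,j,k)} = r⁴ − k·r³ − j·r² − i·r + 8 where r = 64q. -/
def tInt (q i j k : ℕ) : ℤ :=
  (64 * q : ℤ) ^ 4 - k * (64 * q : ℤ) ^ 3 - j * (64 * q : ℤ) ^ 2 - i * (64 * q : ℤ) + 8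

/-- The set U' of integers constructed from the MAX-3-DM instance. -/
def Uset (q : ℕ) (T : Finset (ℕ × ℕ × ℕ)) : Set ℤ :=
  {a | (∃ i, 1 ≤ i ∧ i ≤ q ∧ a = xInt q i) ∨
       (∃ j, 1 ≤ j ∧ j ≤ q ∧ a = yInt q j) ∨
       (∃ k, 1 ≤ k ∧ k ≤ q ∧ a = zInt q k) ∨
       (∃ p ∈ T, a = tInt q p.1 p.2.1 p.2.2)}

lemma xmod (q i : ℕ) : xInt q i % 16 = 1 := by
  obtain ⟨m, hm⟩ : (16:ℤ) ∣ (i * (64 * q) : ℤ) := ⟨i * (4 * q), by push_cast; ring⟩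
  unfold xInt
  omega

lemma ymod (q j : ℕ) : yInt q j % 16 = 2 := by
  obtain ⟨m, hm⟩ : (16:ℤ) ∣ ((j : ℤ) * (64 * q : ℤ) ^ 2) := ⟨j * (256 * q ^ 2), by push_cast; ring⟩
  unfold yInt
  omega

lemma zmod (q k : ℕ) : zInt q k % 16 = 4 := by
  obtain ⟨m, hm⟩ : (16:ℤ) ∣ ((k : ℤ) * (64 * q : ℤ) ^ 3) := ⟨k * (16384 * q ^ 3), by push_cast; ring⟩
  unfold zInt
  omega

lemma tmod (q i j k : ℕ) : tInt q i j k % 16 = 8 := by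
  obtain ⟨m, hm⟩ : (16:ℤ) ∣ ((64 * q : ℤ) ^ 4 - k * (64 * q : ℤ) ^ 3 - j * (64 * q : ℤ) ^ 2
      - i * (64 * q : ℤ)) :=
    ⟨1048576 * q ^ 4 - k * (16384 * q ^ 3) - j * (256 * q ^ 2) - i * (4 * q), by push_cast; ring⟩
  unfold tInt
  omega

lemma classify (q : ℕ) (T : Finset (ℕ × ℕ × ℕ)) (a : ℤ) (h : a ∈ Uset q T) :
    (a % 16 = 1 ∧ ∃ i, 1 ≤ i ∧ i ≤ q ∧ a = xInt q i) ∨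
    (a % 16 = 2 ∧ ∃ j, 1 ≤ j ∧ j ≤ q ∧ a = yInt q j) ∨
    (a % 16 = 4 ∧ ∃ k, 1 ≤ k ∧ k ≤ q ∧ a = zInt q k) ∨
    (a % 16 = 8 ∧ ∃ i j k, (i, j, k) ∈ T ∧ a = tInt q i j k) := by
  rcases h with ⟨i, h1, h2, rfl⟩ | ⟨j, h1, h2, rfl⟩ | ⟨k, h1, h2, rfl⟩ | ⟨p, hp, rfl⟩
  · exact Or.inl ⟨xmod q i, i, h1, h2, rfl⟩
  · exact Or.inr (Or.inl ⟨ymod q j, j, h1, h2, rfl⟩)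
  · exact Or.inr (Or.inr (Or.inl ⟨zmod q k, k, h1, h2, rfl⟩))
  · exact Or.inr (Or.inr (Or.inr ⟨tmod q p.1 p.2.1 p.2.2, p.1, p.2.1, p.2.2, by simpa using hp,
      rfl⟩))

lemma aux (q a b : ℕ) (c : ℤ) (hq : 1 ≤ q) (ha : a ≤ q) (hb : b ≤ q)
    (h : (a:ℤ) - b = 64 * q * c) : a = b ∧ c = 0 := by
  have hq' : (1:ℤ) ≤ q := by exact_mod_cast hq
  have ha' : (a:ℤ) ≤ q := by exact_mod_cast ha
  have hb' : (b:ℤ) ≤ q := by exact_mod_cast hb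
  have ha0 : (0:ℤ) ≤ a := Int.natCast_nonneg a
  have hb0 : (0:ℤ) ≤ b := Int.natCast_nonneg b
  have hc : c = 0 := by
    rcases lt_trichotomy c 0 with h0 | h0 | h0
    · have h1 : c ≤ -1 := by omega
      have h2 : 64 * (q:ℤ) * c ≤ 64 * (q:ℤ) * (-1) :=
        mul_le_mul_of_nonneg_left h1 (by positivity)
      linarith
    · exact h0
    · have h1 : (1:ℤ) ≤ c := by omega
      have h2 : 64 * (q:ℤ) * 1 ≤ 64 * (q:ℤ) * c :=
        mul_le_mul_of_nonneg_left h1 (by positivity)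
      linarith
  have hab : (a:ℤ) - b = 0 := by rw [hc, mul_zero] at h; exact h
  exact ⟨by omega, hc⟩

lemma key (q i j k i' j' k' : ℕ) (hq : 1 ≤ q)
    (hi : i ≤ q) (hj : j ≤ q) (hk : k ≤ q)
    (hi' : i' ≤ q) (hj' : j' ≤ q) (hk' : k' ≤ q)
    (h : (i:ℤ) * (64 * q) + (j:ℤ) * (64 * q : ℤ) ^ 2 + (k:ℤ) * (64 * q : ℤ) ^ 3
       = (i':ℤ) * (64 * q) + (j':ℤ) * (64 * q : ℤ) ^ 2 + (k':ℤ) * (64 * q : ℤ) ^ 3) :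
    i = i' ∧ j = j' ∧ k = k' := by
  have hq' : (1:ℤ) ≤ q := by exact_mod_cast hq
  have hR0 : (64 * (q:ℤ)) ≠ 0 := by positivity
  have h2 : (64 * (q:ℤ)) * ((i:ℤ) + j * (64 * q) + k * (64 * q) ^ 2)
      = (64 * (q:ℤ)) * ((i':ℤ) + j' * (64 * q) + k' * (64 * q) ^ 2) := by
    linear_combination h
  have h2' := mul_left_cancel₀ hR0 h2
  have h3 : (i:ℤ) - i' = 64 * q * ((j':ℤ) - j + ((k':ℤ) - k) * (64 * q)) := by
    linear_combination h2'
  obtain ⟨e1, hc⟩ := aux q i i' _ hq hi hi' h3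
  have h4 : (j:ℤ) - j' = 64 * q * ((k':ℤ) - k) := by linear_combination (-1 : ℤ) * hc
  obtain ⟨e2, hk0⟩ := aux q j j' _ hq hj hj' h4
  exact ⟨e1, e2, by omega⟩

/-- If four integers from U' sum to b = r⁴ + 15, they are exactly the integers
corresponding to a tuple of T together with its three coordinates. -/
theorem stmt_2 (q : ℕ) (hq : 1 ≤ q) (T : Finset (ℕ × ℕ × ℕ))
    (hT : ∀ p ∈ T, (1 ≤ p.1 ∧ p.1 ≤ q) ∧ (1 ≤ p.2.1 ∧ p.2.1 ≤ q) ∧ (1 ≤ p.2.2 ∧ p.2.2 ≤ q))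
    (a₁ a₂ a₃ a₄ : ℤ)
    (h₁ : a₁ ∈ Uset q T) (h₂ : a₂ ∈ Uset q T) (h₃ : a₃ ∈ Uset q T) (h₄ : a₄ ∈ Uset q T)
    (hsum : a₁ + a₂ + a₃ + a₄ = (64 * q : ℤ) ^ 4 + 15) :
    ∃ i j k, (i, j, k) ∈ T ∧
      ({a₁, a₂, a₃, a₄} : Multiset ℤ) = {xInt q i, yInt q j, zInt q k, tInt q i j k} := by
  have hb : (a₁ + a₂ + a₃ + a₄) % 16 = 15 := by
    obtain ⟨m, hm⟩ : (16:ℤ) ∣ (64 * q : ℤ) ^ 4 := ⟨1048576 * q ^ 4, by push_cast; ring⟩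
    rw [hsum, hm]
    omega
  rcases classify q T a₁ h₁ with ⟨m1, i, hi, hi', rfl⟩ | ⟨m1, j, hj, hj', rfl⟩ |
      ⟨m1, k, hk, hk', rfl⟩ | ⟨m1, pi, pj, pk, hp, rfl⟩ <;>
    rcases classify q T a₂ h₂ with ⟨m2, i, hi, hi', rfl⟩ | ⟨m2, j, hj, hj', rfl⟩ |
      ⟨m2, k, hk, hk', rfl⟩ | ⟨m2, pi, pj, pk, hp, rfl⟩ <;>
    rcases classify q T a₃ h₃ with ⟨m3, i, hi, hi', rfl⟩ | ⟨m3, j, hj, hj', rfl⟩ |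
      ⟨m3, k, hk, hk', rfl⟩ | ⟨m3, pi, pj, pk, hp, rfl⟩ <;>
    rcases classify q T a₄ h₄ with ⟨m4, i, hi, hi', rfl⟩ | ⟨m4, j, hj, hj', rfl⟩ |
      ⟨m4, k, hk, hk', rfl⟩ | ⟨m4, pi, pj, pk, hp, rfl⟩ <;>
    first
    | (exfalso; omega)
    | (obtain ⟨⟨_, hi2⟩, ⟨_, hj2⟩, _, hk2⟩ := hT (pi, pj, pk) hp
       obtain ⟨e1, e2, e3⟩ := key q i j k pi pj pk hq hi' hj' hk' hi2 hj2 hk2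
         (by unfold xInt yInt zInt tInt at hsum; push_cast at hsum ⊢; linear_combination hsum)
       subst e1; subst e2; subst e3
       exact ⟨i, j, k, hp,
         by first
            | rfl
            | simp only [Multiset.insert_eq_cons, ← Multiset.cons_zero, Multiset.cons_swap]⟩)
end

section
/- Let q ≥ 1, r = 32q, b = r^4 + 15, and define t'_l = r^4 − r^3 − r^2 − l·r + 8 for l = 1, 2, 3 (corresponding to tuples (x_l, y_1, z_1)). Then t'_1 + t'_2 + t'_3 > 2b. Consequently, the three vectors v(t'_l) = (1/5 + t'_l/(5b), 3/10 − t'_l/(5b)) do not fit in a unit bin: the sum of their first components exceeds 1. -/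
/-- Counterexample to Observation 4 of Woeginger's original proof: the three tuple
vectors for t₁ = (x₁,y₁,z₁), t₂ = (x₂,y₁,z₁), t₃ = (x₃,y₁,z₁) do not fit in a bin. -/
theorem stmt_7 (q : ℕ) (hq : 1 ≤ q) (r b t₁ t₂ t₃ : ℝ)
    (hr : r = 32 * q) (hb : b = r ^ 4 + 15)
    (h₁ : t₁ = r ^ 4 - r ^ 3 - r ^ 2 - 1 * r + 8)
    (h₂ : t₂ = r ^ 4 - r ^ 3 - r ^ 2 - 2 * r + 8)
    (h₃ : t₃ = r ^ 4 - r ^ 3 - r ^ 2 - 3 * r + 8) :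
    t₁ + t₂ + t₃ > 2 * b ∧
    1 < (1 / 5 + t₁ / (5 * b)) + (1 / 5 + t₂ / (5 * b)) + (1 / 5 + t₃ / (5 * b)) := by
  have hq' : (1:ℝ) ≤ q := by exact_mod_cast hq
  have hr32 : (32:ℝ) ≤ r := by rw [hr]; nlinarith
  have hsum : t₁ + t₂ + t₃ > 2 * b := by
    rw [h₁, h₂, h₃, hb]; nlinarith [pow_le_pow_left₀ (by norm_num : (0:ℝ) ≤ 32) hr32 3,
      sq_nonneg r, sq_nonneg (r - 32)]
  refine ⟨hsum, ?_⟩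
  have hbpos : (0:ℝ) < b := by rw [hb]; nlinarith
  have key : 1 < 3/5 + (t₁ + t₂ + t₃) / (5 * b) := by
    have h25 : (2:ℝ)/5 < (t₁+t₂+t₃)/(5*b) := by
      rw [lt_div_iff₀ (by positivity : (0:ℝ) < 5*b)]; nlinarith
    linarith
  have e : t₁ / (5*b) + t₂ / (5*b) + t₃ / (5*b) = (t₁ + t₂ + t₃) / (5*b) := by ring
  nlinarith [key, e]
end

section
/- Let α_0 = 0.9690082645 and β_0 = 0.979338843. For every integer m with 4 ≤ m, it holds that (β_0 − α_0)/(m(2m−3) − (m−1)^2·β_0) > ((2/(m+1))^2)/400. Equivalently, with δ = 2/(m+1), the gap exceeds δ²/400. -/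
/-- Gap-to-δ conversion for skewed vector bin packing. -/
theorem stmt_15 (α₀ β₀ : ℝ) (hα : α₀ = 0.9690082645) (hβ : β₀ = 0.979338843)
    (m : ℕ) (hm : 4 ≤ m) :
    (β₀ - α₀) / ((m : ℝ) * (2 * m - 3) - ((m : ℝ) - 1) ^ 2 * β₀)
      > (2 / ((m : ℝ) + 1)) ^ 2 / 400 := by
  subst hα hβ
  have hx : (4 : ℝ) ≤ (m : ℝ) := by exact_mod_cast hm
  set x := (m : ℝ) with hxdef
  have hD : 0 < x * (2 * x - 3) - (x - 1) ^ 2 * 0.979338843 := by nlinarith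
  have h1 : (0:ℝ) < x + 1 := by linarith
  rw [gt_iff_lt, div_pow, div_div, div_lt_div_iff₀ (by positivity) hD]
  nlinarith [sq_nonneg (x - 4), sq_nonneg x]
end

section
/- Let b > 0 and a'_1, a'_2, a'_3, a'_4 ∈ (0, b) be real numbers, and define v(a') = (1/5 + a'/(5b), 3/10 − a'/(5b)) ∈ ℝ². Then v(a'_1) + v(a'_2) + v(a'_3) + v(a'_4) ≥ (1,1) componentwise if and only if a'_1 + a'_2 + a'_3 + a'_4 = b, in which case the sum equals exactly (1,1). -/
/-- Four item vectors cover a bin iff the corresponding reals sum to b, in which case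
they cover the bin exactly. -/
theorem stmt_16 (b : ℝ) (hb : 0 < b) (a₁ a₂ a₃ a₄ : ℝ)
    (h₁ : a₁ ∈ Set.Ioo 0 b) (h₂ : a₂ ∈ Set.Ioo 0 b)
    (h₃ : a₃ ∈ Set.Ioo 0 b) (h₄ : a₄ ∈ Set.Ioo 0 b) :
    let v : ℝ → ℝ × ℝ := fun a => (1 / 5 + a / (5 * b), 3 / 10 - a / (5 * b))
    (((1 : ℝ), (1 : ℝ)) ≤ v a₁ + v a₂ + v a₃ + v a₄ ↔ a₁ + a₂ + a₃ + a₄ = b) ∧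
    (a₁ + a₂ + a₃ + a₄ = b → v a₁ + v a₂ + v a₃ + v a₄ = ((1 : ℝ), (1 : ℝ))) := by
  intro v
  have hb5 : (0:ℝ) < 5 * b := by linarith
  have hne : (5 * b : ℝ) ≠ 0 := ne_of_gt hb5
  have hsum : ∀ x : ℝ, x / (5 * b) * (5 * b) = x := fun x => div_mul_cancel₀ x hne
  simp only [v, Prod.mk_add_mk, Prod.mk_le_mk, Prod.mk.injEq]
  constructor
  · constructor
    · rintro ⟨hfst, hsnd⟩
      nlinarith [hsum a₁, hsum a₂, hsum a₃, hsum a₄,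
        mul_le_mul_of_nonneg_right hfst (le_of_lt hb5),
        mul_le_mul_of_nonneg_right hsnd (le_of_lt hb5)]
    · intro h
      have e1 : a₁ / (5*b) + a₂ / (5*b) + a₃ / (5*b) + a₄ / (5*b) = 1/5 := by
        field_simp; linarith
      constructor <;> linarith
  · intro h
    have e1 : a₁ / (5*b) + a₂ / (5*b) + a₃ / (5*b) + a₄ / (5*b) = 1/5 := by
      field_simp; linarith
    constructor <;> linarith
end
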